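/- arXiv:2502.08408 — 4 statements merged into one kernel-verified Lean document; each statement's English description precedes it below -/
import Mathlib

section
/- For any τ ≥ 0 and any s > 1/(1+τ), the s-dimensional Hausdorff measure of L(τ) is zero, where L(τ) is the set of x ∈ (0,1] such that 0 < x − P_n(x)/Q_n(x) < 1/Q_n(x)^{1+τ} for infinitely many n. Consequently dim_H L(τ) ≤ 1/(1+τ). -/
open MeasureTheory Filter Set

/-- The Lüroth map `T(x) = ⌊1/x⌋(⌊1/x + 1⌋x − 1)`. -/
noncomputable def lurothT (x : ℝ) : ℝ :=
  (⌊x⁻¹⌋ : ℝ) * (((⌊x⁻¹⌋ : ℝ) + 1) * x - 1)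

/-- The `n`-th Lüroth digit (1-indexed): `d_n(x) = ⌊1/(T^{n-1}x)⌋ + 1`. -/
noncomputable def lurothD (x : ℝ) (n : ℕ) : ℕ :=
  ⌊(lurothT^[n - 1] x)⁻¹⌋₊ + 1

/-- The (unsimplified) denominator `Q_n(x) = d_n ∏_{j=1}^{n-1} d_j(d_j−1)`. -/
noncomputable def lurothQ (x : ℝ) (n : ℕ) : ℕ :=
  lurothD x n * ∏ j ∈ Finset.Ico 1 n, lurothD x j * (lurothD x j - 1)

/-- The `n`-th Lüroth convergent `P_n(x)/Q_n(x) = ∑_{k=1}^n 1/Q_k(x)`. -/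
noncomputable def lurothConv (x : ℝ) (n : ℕ) : ℝ :=
  ∑ k ∈ Finset.Icc 1 n, ((lurothQ x k : ℝ))⁻¹

/-- The (unsimplified) numerator `P_n(x)`. -/
noncomputable def lurothP (x : ℝ) (n : ℕ) : ℝ := lurothConv x n * (lurothQ x n : ℝ)

/-- Lüroth `ψ`-well approximable numbers. -/
def Lpsi (ψ : ℕ → ℝ) : Set ℝ :=
  {x ∈ Set.Ioc (0:ℝ) 1 | ∀ N : ℕ, ∃ n, N ≤ n ∧ 1 ≤ n ∧
    |x - lurothConv x n| < ψ (lurothQ x n) / (lurothQ x n : ℝ)}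

/-- Lüroth `τ`-well approximable numbers. -/
noncomputable def Ltau (τ : ℝ) : Set ℝ :=
  {x ∈ Set.Ioc (0:ℝ) 1 | ∀ N : ℕ, ∃ n, N ≤ n ∧ 1 ≤ n ∧
    |x - lurothConv x n| < ((lurothQ x n : ℝ)) ^ (-(1 + τ))}

/-!
Every `x ∈ L(τ)` lies, for infinitely many `m`, in a ball of radius `Q_{m+1}^{-(1+τ)}` around a
Lüroth convergent, and these balls are indexed by the admissible digit blocks
`d_1, …, d_m ≥ 2`, `d_{m+1} ≥ 1`. With `a = s(1+τ) > 1`, the sum of `Q_{m+1}^{-a}` over the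
blocks of length `m + 1` factorizes as `c^m · ∑_{d ≥ 1} d^{-a}` with `c = ∑_{d ≥ 2} (d(d-1))^{-a}`,
and `c < 1` because `∑_{d ≥ 2} 1/(d(d-1)) = 1`. So the `s`-th powers of the diameters of all the
balls have a finite sum, and the Hausdorff–Cantelli lemma gives `μH[s] L(τ) = 0`.
-/

open scoped NNReal ENNReal Topology

section HausdorffCantelli

variable {X : Type*} [EMetricSpace X] [MeasurableSpace X] [BorelSpace X]

theorem hausdorffMeasure_limsup_iUnion_eq_zero {κ : ℕ → Type*} [∀ n, Countable (κ n)]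
    {s : ℝ} (hs : 0 < s) (U : ∀ n, κ n → Set X)
    (hU : ∑' n, ∑' i, Metric.ediam (U n i) ^ s ≠ ∞) :
    μH[s] (limsup (fun n => ⋃ i, U n i) atTop) = 0 := by
  set tail : Finset ℕ → ℝ≥0∞ := fun F =>
    ∑' n : {n // n ∉ F}, ∑' i, Metric.ediam (U n i) ^ s
  have htail : Tendsto tail atTop (𝓝 0) := ENNReal.tendsto_tsum_compl_atTop_zero hU
  -- Each set of the tail cover has `ediam ^ s` at most the tail sum, so the diameters shrink too.
  have hdiam : Tendsto (fun F => tail F ^ s⁻¹) atTop (𝓝 0) := by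
    simpa [Function.comp_def, ENNReal.zero_rpow_of_pos (inv_pos.mpr hs)] using
      (ENNReal.continuous_rpow_const (y := s⁻¹)).tendsto 0 |>.comp htail
  have hdiam_le (F : Finset ℕ) (j : Σ n : {n // n ∉ F}, κ n) :
      Metric.ediam (U j.1 j.2) ≤ tail F ^ s⁻¹ :=
    calc Metric.ediam (U j.1 j.2) = (Metric.ediam (U j.1 j.2) ^ s) ^ s⁻¹ :=
          (ENNReal.rpow_rpow_inv hs.ne' _).symm
      _ ≤ tail F ^ s⁻¹ := by
          gcongr
          exact (ENNReal.le_tsum j.2).trans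
            (ENNReal.le_tsum (f := fun n : {n // n ∉ F} => ∑' i, Metric.ediam (U n i) ^ s) j.1)
  have hsubset (F : Finset ℕ) :
      limsup (fun n => ⋃ i, U n i) atTop ⊆ ⋃ j : Σ n : {n // n ∉ F}, κ n, U j.1 j.2 := by
    intro x hx
    rw [mem_limsup_iff_frequently_mem, ← Nat.cofinite_eq_atTop] at hx
    obtain ⟨n, hxn, hnF⟩ := (hx.and_eventually F.eventually_cofinite_notMem).exists
    obtain ⟨i, hxi⟩ := mem_iUnion.mp hxn
    exact mem_iUnion.mpr ⟨⟨⟨n, hnF⟩, i⟩, hxi⟩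
  have hcover := Measure.hausdorffMeasure_le_liminf_tsum s _ _ hdiam
    (fun F (j : Σ n : {n // n ∉ F}, κ n) => U j.1 j.2)
    (Eventually.of_forall hdiam_le) (Eventually.of_forall hsubset)
  simp only [ENNReal.tsum_sigma'] at hcover
  exact le_antisymm (hcover.trans htail.liminf_eq.le) bot_le

end HausdorffCantelli

theorem ENNReal.tsum_pi_fin_prod {α : Type*} :
    ∀ (m : ℕ) (f : Fin m → α → ℝ≥0∞),
      ∑' e : Fin m → α, ∏ i, f i (e i) = ∏ i, ∑' a, f i a
  | 0, f => by simp
  | m + 1, f => by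
    rw [← (Fin.consEquiv fun _ => α).tsum_eq, Fin.prod_univ_succ, ← ENNReal.tsum_pi_fin_prod m,
      ← ENNReal.tsum_mul_right]
    simp only [Fin.prod_univ_succ, ← ENNReal.tsum_mul_left]
    exact ENNReal.tsum_prod (f := fun a (e : Fin m → α) => f 0 a * ∏ i : Fin m, f i.succ (e i))

theorem hasSum_inv_add_two_mul_add_one :
    HasSum (fun j : ℕ => (((j : ℝ) + 2) * (j + 1))⁻¹) 1 := by
  rw [hasSum_iff_tendsto_nat_of_nonneg (fun j => by positivity)]
  have hsum (n : ℕ) :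
      ∑ j ∈ Finset.range n, (((j : ℝ) + 2) * (j + 1))⁻¹ = 1 - ((n : ℝ) + 1)⁻¹ := by
    have hj (j : ℕ) :
        (((j : ℝ) + 2) * (j + 1))⁻¹ = ((j : ℝ) + 1)⁻¹ - (((j + 1 : ℕ) : ℝ) + 1)⁻¹ := by
      push_cast; field_simp; ring
    simp only [hj, Finset.sum_range_sub' (fun j : ℕ => ((j : ℝ) + 1)⁻¹)]
    simp
  simp only [hsum]
  simpa using tendsto_const_nhds.sub (tendsto_one_div_add_atTop_nhds_zero_nat (𝕜 := ℝ))

theorem ENNReal.tsum_inv_add_two_mul_add_one :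
    ∑' j : ℕ, (((j : ℝ≥0∞) + 2) * (j + 1))⁻¹ = 1 := by
  have h (j : ℕ) :
      (((j : ℝ≥0∞) + 2) * (j + 1))⁻¹ = ENNReal.ofReal (((j : ℝ) + 2) * (j + 1))⁻¹ := by
    rw [ENNReal.ofReal_inv_of_pos (by positivity), ENNReal.ofReal_mul (by positivity)]
    norm_cast
  have hsum := hasSum_inv_add_two_mul_add_one
  simp only [h]
  rw [← ENNReal.ofReal_tsum_of_nonneg (fun j => by positivity) hsum.summable, hsum.tsum_eq,
    ENNReal.ofReal_one]

theorem ENNReal.tsum_add_two_mul_add_one_rpow_neg_lt_one {a : ℝ} (ha : 1 < a) :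
    ∑' j : ℕ, (((j : ℝ≥0∞) + 2) * (j + 1)) ^ (-a) < 1 := by
  have hle (j : ℕ) :
      (((j : ℝ≥0∞) + 2) * (j + 1)) ^ (-a) ≤ (((j : ℝ≥0∞) + 2) * (j + 1))⁻¹ := by
    rw [← ENNReal.rpow_neg_one]
    refine ENNReal.rpow_le_rpow_of_exponent_le ?_ (by linarith)
    exact_mod_cast Nat.one_le_iff_ne_zero.mpr (by positivity : (j + 2) * (j + 1) ≠ 0)
  have hlt : (2 : ℝ≥0∞) ^ (-a) < 2⁻¹ := by
    rw [← ENNReal.rpow_neg_one]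
    exact ENNReal.rpow_lt_rpow_of_exponent_lt one_lt_two ENNReal.ofNat_ne_top (by linarith)
  have hfin := (ENNReal.tsum_le_tsum hle).trans_eq ENNReal.tsum_inv_add_two_mul_add_one
  exact (ENNReal.tsum_lt_tsum (i := 0) (ne_top_of_le_ne_top ENNReal.one_ne_top hfin) hle
    (by norm_num [hlt])).trans_eq ENNReal.tsum_inv_add_two_mul_add_one

theorem ENNReal.tsum_add_one_rpow_neg_ne_top {a : ℝ} (ha : 1 < a) :
    ∑' k : ℕ, ((k : ℝ≥0∞) + 1) ^ (-a) ≠ ∞ := by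
  have h (k : ℕ) : ((k : ℝ≥0∞) + 1) ^ (-a) = ((((k + 1 : ℕ) : ℝ≥0) ^ (-a) : ℝ≥0) : ℝ≥0∞) := by
    rw [ENNReal.coe_rpow_of_ne_zero (by positivity)]
    norm_cast
  simp only [h]
  exact ENNReal.tsum_coe_ne_top_iff_summable.mpr
    ((NNReal.summable_nat_add_iff 1).mpr (NNReal.summable_rpow.mpr (by linarith)))

namespace Luroth

/- Denominators and convergents of an arbitrary digit sequence `D` (read from index `1`);
`lurothQ x` and `lurothConv x` are `denom (lurothD x)` and `conv (lurothD x)` by definition. -/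
def denom (D : ℕ → ℕ) (n : ℕ) : ℕ :=
  D n * ∏ j ∈ Finset.Ico 1 n, D j * (D j - 1)

noncomputable def conv (D : ℕ → ℕ) (n : ℕ) : ℝ :=
  ∑ k ∈ Finset.Icc 1 n, (denom D k : ℝ)⁻¹

theorem denom_congr {D D' : ℕ → ℕ} {n : ℕ} (h : ∀ j ∈ Finset.Icc 1 n, D j = D' j)
    (hn : 1 ≤ n) : denom D n = denom D' n := by
  unfold denom
  rw [h n (Finset.mem_Icc.mpr ⟨hn, le_rfl⟩)]
  refine congrArg _ (Finset.prod_congr rfl fun j hj => ?_)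
  rw [h j (Finset.mem_Icc.mpr ⟨(Finset.mem_Ico.mp hj).1, (Finset.mem_Ico.mp hj).2.le⟩)]

theorem conv_congr {D D' : ℕ → ℕ} {n : ℕ} (h : ∀ j ∈ Finset.Icc 1 n, D j = D' j) :
    conv D n = conv D' n := by
  refine Finset.sum_congr rfl fun k hk => ?_
  obtain ⟨hk1, hkn⟩ := Finset.mem_Icc.mp hk
  rw [denom_congr (fun j hj => h j (Finset.Icc_subset_Icc_right hkn hj)) hk1]

/-- Parametrizes, without side conditions, the digit blocks `d_1, …, d_{m+1}` with `d_j ≥ 2` for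
`j ≤ m` (equivalently `Q_{m+1} ≠ 0`) and `d_{m+1} ≥ 1`. -/
def digitSeq {m : ℕ} (e : Fin m → ℕ) (k : ℕ) (j : ℕ) : ℕ :=
  if h : j - 1 < m then e ⟨j - 1, h⟩ + 2 else k + 1

theorem denom_digitSeq {m : ℕ} (e : Fin m → ℕ) (k : ℕ) :
    denom (digitSeq e k) (m + 1) = (k + 1) * ∏ i, (e i + 2) * (e i + 1) := by
  unfold denom
  rw [Finset.prod_Ico_eq_prod_range, Nat.add_sub_cancel, ← Fin.prod_univ_eq_prod_range]
  simp [digitSeq]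

theorem denom_digitSeq_rpow {m : ℕ} (e : Fin m → ℕ) (k : ℕ) (a : ℝ) :
    (denom (digitSeq e k) (m + 1) : ℝ≥0∞) ^ a =
      ((k : ℝ≥0∞) + 1) ^ a * ∏ i, (((e i : ℝ≥0∞) + 2) * (e i + 1)) ^ a := by
  rw [denom_digitSeq, ENNReal.prod_rpow_of_ne_top (fun i _ => by simp [ENNReal.mul_eq_top]),
    ← ENNReal.mul_rpow_of_ne_zero (by simp) (Finset.prod_ne_zero_iff.mpr fun i _ => by simp)]
  push_cast
  rfl

theorem tsum_denom_digitSeq_rpow (m : ℕ) (a : ℝ) :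
    ∑' i : (Fin m → ℕ) × ℕ, (denom (digitSeq i.1 i.2) (m + 1) : ℝ≥0∞) ^ a =
      (∑' j : ℕ, (((j : ℝ≥0∞) + 2) * (j + 1)) ^ a) ^ m *
        ∑' k : ℕ, ((k : ℝ≥0∞) + 1) ^ a := by
  simp only [denom_digitSeq_rpow]
  rw [ENNReal.tsum_prod']
  simp only [ENNReal.tsum_mul_right]
  rw [ENNReal.tsum_mul_left,
    ENNReal.tsum_pi_fin_prod m fun _ (j : ℕ) => (((j : ℝ≥0∞) + 2) * (j + 1)) ^ a,
    Finset.prod_const, Finset.card_univ, Fintype.card_fin, mul_comm]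

theorem one_le_lurothD (x : ℝ) (j : ℕ) : 1 ≤ lurothD x j := Nat.le_add_left _ _

theorem two_le_lurothD {x : ℝ} {n j : ℕ} (hQ : lurothQ x n ≠ 0) (hj : j ∈ Finset.Ico 1 n) :
    2 ≤ lurothD x j := by
  have := right_ne_zero_of_mul ((Finset.prod_ne_zero_iff.mp (right_ne_zero_of_mul hQ)) j hj)
  omega

def approxBall (τ : ℝ) {m : ℕ} (e : Fin m → ℕ) (k : ℕ) : Set ℝ :=
  Metric.eball (conv (digitSeq e k) (m + 1))
    ((denom (digitSeq e k) (m + 1) : ℝ≥0∞) ^ (-(1 + τ)))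

theorem ediam_approxBall_rpow_le (τ : ℝ) {s : ℝ} (hs : 0 ≤ s) {m : ℕ} (e : Fin m → ℕ)
    (k : ℕ) :
    Metric.ediam (approxBall τ e k) ^ s ≤
      2 ^ s * (denom (digitSeq e k) (m + 1) : ℝ≥0∞) ^ (-(s * (1 + τ))) :=
  calc Metric.ediam (approxBall τ e k) ^ s
      ≤ (2 * (denom (digitSeq e k) (m + 1) : ℝ≥0∞) ^ (-(1 + τ))) ^ s :=
        ENNReal.rpow_le_rpow Metric.ediam_eball_le hs
    _ = _ := by rw [ENNReal.mul_rpow_of_nonneg _ _ hs, ← ENNReal.rpow_mul]; ring_nf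

theorem Ltau_subset_limsup_approxBall {τ : ℝ} (hτ : 1 + τ ≠ 0) :
    Ltau τ ⊆ limsup (fun m => ⋃ i : (Fin m → ℕ) × ℕ, approxBall τ i.1 i.2) atTop := by
  rintro x ⟨-, hx⟩
  rw [mem_limsup_iff_frequently_mem, frequently_atTop]
  intro N
  obtain ⟨n, hNn, hn, hlt⟩ := hx (N + 1)
  -- `0 ^ (-(1 + τ)) = 0`, so the approximation inequality rules out a zero denominator.
  have hQ : lurothQ x n ≠ 0 := by
    intro h0
    rw [h0, Nat.cast_zero, Real.zero_rpow (neg_ne_zero.mpr hτ)] at hlt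
    exact (abs_nonneg _).not_gt hlt
  obtain ⟨m, rfl⟩ : ∃ m, n = m + 1 := ⟨n - 1, by omega⟩
  set e : Fin m → ℕ := fun i => lurothD x (i + 1) - 2
  set k := lurothD x (m + 1) - 1
  have hdigits : ∀ j ∈ Finset.Icc 1 (m + 1), digitSeq e k j = lurothD x j := by
    intro j hj
    obtain ⟨hj1, hjm⟩ := Finset.mem_Icc.mp hj
    unfold digitSeq
    split_ifs with h
    · have := two_le_lurothD hQ (Finset.mem_Ico.mpr ⟨hj1, by omega⟩)
      simp only [e, Nat.sub_add_cancel hj1]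
      omega
    · have := one_le_lurothD x (m + 1)
      obtain rfl : j = m + 1 := by omega
      omega
  refine ⟨m, by omega, mem_iUnion.mpr ⟨(e, k), ?_⟩⟩
  have hQpos : (0 : ℝ) < denom (lurothD x) (m + 1) := Nat.cast_pos.mpr (Nat.pos_of_ne_zero hQ)
  rw [approxBall, Metric.mem_eball, denom_congr hdigits (by omega), conv_congr hdigits,
    edist_dist, Real.dist_eq, ← ENNReal.ofReal_natCast, ENNReal.ofReal_rpow_of_pos hQpos,
    ENNReal.ofReal_lt_ofReal_iff (Real.rpow_pos_of_pos hQpos _)]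
  exact hlt

end Luroth

open Luroth in
theorem hausdorffMeasure_Ltau_eq_zero {τ s : ℝ} (hs : 0 < s) (hsτ : 1 < s * (1 + τ)) :
    μH[s] (Ltau τ) = 0 := by
  have hτ : 1 + τ ≠ 0 := fun h => by simp [h] at hsτ; linarith
  refine measure_mono_null (Ltau_subset_limsup_approxBall hτ)
    (hausdorffMeasure_limsup_iUnion_eq_zero hs _ ?_)
  set c := ∑' j : ℕ, (((j : ℝ≥0∞) + 2) * (j + 1)) ^ (-(s * (1 + τ)))
  set Z := ∑' k : ℕ, ((k : ℝ≥0∞) + 1) ^ (-(s * (1 + τ)))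
  have hc : c < 1 := ENNReal.tsum_add_two_mul_add_one_rpow_neg_lt_one hsτ
  have hZ : Z ≠ ∞ := ENNReal.tsum_add_one_rpow_neg_ne_top hsτ
  have hlevel (m : ℕ) :
      ∑' i : (Fin m → ℕ) × ℕ, Metric.ediam (approxBall τ i.1 i.2) ^ s ≤
        2 ^ s * Z * c ^ m :=
    calc _ ≤ ∑' i : (Fin m → ℕ) × ℕ,
          2 ^ s * (denom (digitSeq i.1 i.2) (m + 1) : ℝ≥0∞) ^ (-(s * (1 + τ))) :=
          ENNReal.tsum_le_tsum fun i => ediam_approxBall_rpow_le τ hs.le i.1 i.2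
      _ = 2 ^ s * Z * c ^ m := by
          rw [ENNReal.tsum_mul_left, tsum_denom_digitSeq_rpow]; ring
  refine ne_top_of_le_ne_top ?_ (ENNReal.tsum_le_tsum hlevel)
  rw [ENNReal.tsum_mul_left, ENNReal.tsum_geometric]
  exact ENNReal.mul_ne_top (ENNReal.mul_ne_top (by simp) hZ)
    (ENNReal.inv_ne_top.mpr (tsub_pos_of_lt hc).ne')

theorem stmt7 (τ s : ℝ) (hτ : 0 ≤ τ) (hs : 1 / (1 + τ) < s) :
    μH[s] (Ltau τ) = 0 ∧ dimH (Ltau τ) ≤ ENNReal.ofReal (1 / (1 + τ)) := by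
  have hτ₁ : 0 < 1 + τ := by linarith
  have hnull (t : ℝ) (ht : 1 / (1 + τ) < t) : μH[t] (Ltau τ) = 0 :=
    hausdorffMeasure_Ltau_eq_zero ((one_div_pos.mpr hτ₁).trans ht)
      ((div_lt_iff₀ hτ₁).mp ht)
  refine ⟨hnull s hs, dimH_le fun d hd => ?_⟩
  rw [← ENNReal.ofReal_coe_nnreal]
  refine ENNReal.ofReal_le_ofReal (not_lt.mp fun hlt => ?_)
  simp [hnull d hlt] at hd
end

section
/- Every irrational x in (0,1] has infinitely many Lüroth digits d_n(x) ≥ 3, and consequently for infinitely many n, 0 < x − P_n(x)/Q_n(x) < 1/Q_n(x). In particular, the set of irrationals in (0,1] is contained in L(0), so dim_H L(0) = 1. -/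
/-!
The Lüroth map `T` sends `(0, 1]` into itself and preserves irrationality there, and by induction
`x - P_n/Q_n = T^n x / ∏_{j ≤ n} d_j (d_j - 1)`, which lies in `(0, 1/Q_n)` as soon as
`T^n x < 1`, in particular for every irrational `x`. If `d_n(x) = 2` for all large `n`, then `T`
acts as `y ↦ 2y - 1` along the orbit, so `1 - T^n x` doubles at each step and eventually exceeds
`1`, contradicting `T^n x > 0`. Removing the countably many rationals from `(0, 1]` leaves a set
of Hausdorff dimension `1` inside `L(0)`.
-/

open MeasureTheory Filter Set

lemma lurothD_succ (x : ℝ) (n : ℕ) : lurothD x (n + 1) = ⌊(lurothT^[n] x)⁻¹⌋₊ + 1 := rfl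

lemma one_le_lurothD (x : ℝ) (n : ℕ) : 1 ≤ lurothD x n := Nat.le_add_left 1 _

lemma lurothT_eq_natFloor {y : ℝ} (hy : 0 ≤ y) :
    lurothT y = ⌊y⁻¹⌋₊ * ((⌊y⁻¹⌋₊ + 1) * y - 1) := by
  rw [lurothT, ← natCast_floor_eq_intCast_floor (inv_nonneg.2 hy)]

lemma lurothT_mapsTo : MapsTo lurothT (Ioc 0 1) (Ioc 0 1) := by
  rintro y ⟨hy0, hy1⟩
  set k := ⌊y⁻¹⌋₊
  have hk1 : (1 : ℝ) ≤ k := by exact_mod_cast Nat.le_floor (by simpa using (one_le_inv₀ hy0).2 hy1)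
  have hky : k * y ≤ 1 := by
    simpa [inv_mul_cancel₀ hy0.ne'] using
      mul_le_mul_of_nonneg_right (Nat.floor_le (inv_nonneg.2 hy0.le)) hy0.le
  have hk1y : 1 < (k + 1) * y := by
    simpa [inv_mul_cancel₀ hy0.ne'] using mul_lt_mul_of_pos_right (Nat.lt_floor_add_one y⁻¹) hy0
  rw [mem_Ioc, lurothT_eq_natFloor hy0.le]
  constructor <;> nlinarith

lemma Irrational.lurothT {y : ℝ} (h : Irrational y) (hy : y ∈ Ioc 0 1) :
    Irrational (lurothT y) := by
  have hk : ⌊y⁻¹⌋₊ ≠ 0 := (Nat.floor_pos.2 ((one_le_inv₀ hy.1).2 hy.2)).ne'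
  rw [_root_.lurothT_eq_natFloor hy.1.le,
    show (⌊y⁻¹⌋₊ : ℝ) * ((⌊y⁻¹⌋₊ + 1) * y - 1)
      = ((⌊y⁻¹⌋₊ * (⌊y⁻¹⌋₊ + 1) : ℕ) : ℝ) * y - (⌊y⁻¹⌋₊ : ℕ) by push_cast; ring]
  exact (h.natCast_mul (mul_ne_zero hk (Nat.succ_ne_zero _))).sub_natCast _

lemma lurothT_mapsTo_irrational :
    MapsTo lurothT ({y | Irrational y} ∩ Ioc 0 1) ({y | Irrational y} ∩ Ioc 0 1) :=
  fun _ ⟨h, hy⟩ ↦ ⟨h.lurothT hy, lurothT_mapsTo hy⟩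

lemma two_le_lurothD {x : ℝ} (hx : x ∈ Ioc 0 1) (n : ℕ) : 2 ≤ lurothD x n := by
  obtain ⟨h0, h1⟩ := lurothT_mapsTo.iterate (n - 1) hx
  have := Nat.floor_pos.2 ((one_le_inv₀ h0).2 h1)
  unfold lurothD; omega

-- The reciprocal of the length of the rank-`n` Lüroth cylinder containing `x`.
noncomputable def lurothR (x : ℝ) (n : ℕ) : ℝ :=
  ∏ j ∈ Finset.Icc 1 n, (lurothD x j : ℝ) * (lurothD x j - 1)

lemma lurothR_succ (x : ℝ) (n : ℕ) :
    lurothR x (n + 1) = lurothR x n * (lurothD x (n + 1) * (lurothD x (n + 1) - 1)) :=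
  Finset.prod_Icc_succ_top (Nat.le_add_left 1 n) _

lemma lurothQ_succ (x : ℝ) (n : ℕ) :
    (lurothQ x (n + 1) : ℝ) = lurothD x (n + 1) * lurothR x n := by
  simp [lurothQ, lurothR, Finset.Ico_add_one_right_eq_Icc, Nat.cast_sub (one_le_lurothD x _)]

lemma lurothConv_succ (x : ℝ) (n : ℕ) :
    lurothConv x (n + 1) = lurothConv x n + (lurothQ x (n + 1) : ℝ)⁻¹ :=
  Finset.sum_Icc_succ_top (Nat.le_add_left 1 n) _

lemma lurothR_pos {x : ℝ} (hx : x ∈ Ioc 0 1) (n : ℕ) : 0 < lurothR x n := by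
  refine Finset.prod_pos fun j _ ↦ ?_
  have : (2 : ℝ) ≤ lurothD x j := by exact_mod_cast two_le_lurothD hx j
  nlinarith

lemma sub_lurothConv_eq {x : ℝ} (hx : x ∈ Ioc 0 1) (n : ℕ) :
    x - lurothConv x n = lurothT^[n] x / lurothR x n := by
  induction n with
  | zero => simp [lurothConv, lurothR]
  | succ n ih =>
    set y := lurothT^[n] x
    set d : ℝ := (lurothD x (n + 1) : ℝ) with hd
    have hd2 : (2 : ℝ) ≤ d := by rw [hd]; exact_mod_cast two_le_lurothD hx (n + 1)
    have hd0 : d ≠ 0 := by linarith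
    have hd1 : d - 1 ≠ 0 := by linarith
    have hR := (lurothR_pos hx n).ne'
    have hTy : lurothT y = (d - 1) * (d * y - 1) := by
      rw [lurothT_eq_natFloor (lurothT_mapsTo.iterate n hx).1.le, hd, lurothD_succ]; push_cast; ring
    rw [Function.iterate_succ_apply', hTy, lurothConv_succ, lurothQ_succ, lurothR_succ, ← hd,
      ← sub_sub, ih]
    field_simp

lemma sub_lurothConv_pos {x : ℝ} (hx : x ∈ Ioc 0 1) (n : ℕ) : 0 < x - lurothConv x n := by
  rw [sub_lurothConv_eq hx]
  exact div_pos (lurothT_mapsTo.iterate n hx).1 (lurothR_pos hx n)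

lemma sub_lurothConv_lt {x : ℝ} (hx : x ∈ Ioc 0 1) {n : ℕ} (hn : 1 ≤ n)
    (hT : lurothT^[n] x < 1) : x - lurothConv x n < (lurothQ x n : ℝ)⁻¹ := by
  obtain ⟨m, rfl⟩ := Nat.exists_eq_add_of_le' hn
  have hd : (2 : ℝ) ≤ lurothD x (m + 1) := by exact_mod_cast two_le_lurothD hx (m + 1)
  have hQ : 0 < (lurothQ x (m + 1) : ℝ) := by
    rw [lurothQ_succ]; exact mul_pos (by linarith) (lurothR_pos hx m)
  have hQR : lurothR x (m + 1) = lurothQ x (m + 1) * (lurothD x (m + 1) - 1) := by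
    rw [lurothR_succ, lurothQ_succ]; ring
  calc x - lurothConv x (m + 1) = lurothT^[m + 1] x / lurothR x (m + 1) := sub_lurothConv_eq hx _
    _ < 1 / lurothR x (m + 1) := by gcongr; exact lurothR_pos hx _
    _ ≤ (lurothQ x (m + 1) : ℝ)⁻¹ := by
      rw [one_div, hQR]
      exact inv_anti₀ hQ (le_mul_of_one_le_right hQ.le (by linarith))

lemma one_sub_lurothT_iterate_add {x : ℝ} (hx : x ∈ Ioc 0 1) {m : ℕ}
    (h : ∀ n, m < n → lurothD x n = 2) (k : ℕ) :
    1 - lurothT^[m + k] x = 2 ^ k * (1 - lurothT^[m] x) := by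
  induction k with
  | zero => simp
  | succ k ih =>
    have hfloor : ⌊(lurothT^[m + k] x)⁻¹⌋₊ = 1 := by
      have := h (m + k + 1) (by omega)
      rw [lurothD_succ] at this
      omega
    rw [← add_assoc, Function.iterate_succ_apply',
      lurothT_eq_natFloor (lurothT_mapsTo.iterate _ hx).1.le,
      hfloor, pow_succ]
    push_cast
    linear_combination 2 * ih

lemma exists_gt_three_le_lurothD {x : ℝ} (hx : x ∈ Ioc 0 1) (hirr : Irrational x) (m : ℕ) :
    ∃ n, m < n ∧ 3 ≤ lurothD x n := by
  by_contra! h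
  have htwo : ∀ n, m < n → lurothD x n = 2 := fun n hn ↦
    le_antisymm (Nat.le_of_lt_succ (h n hn)) (two_le_lurothD hx n)
  obtain ⟨hirr_m, hm⟩ := lurothT_mapsTo_irrational.iterate m ⟨hirr, hx⟩
  have hε : 0 < 1 - lurothT^[m] x := sub_pos.2 (hm.2.lt_of_ne hirr_m.ne_one)
  obtain ⟨k, hk⟩ := pow_unbounded_of_one_lt (1 - lurothT^[m] x)⁻¹ one_lt_two
  have hgt : 1 < 2 ^ k * (1 - lurothT^[m] x) := by rwa [inv_lt_iff_one_lt_mul₀ hε] at hk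
  have := (lurothT_mapsTo.iterate (m + k) hx).1
  rw [← one_sub_lurothT_iterate_add hx htwo k] at hgt
  linarith

lemma Irrational.sub_lurothConv_lt {x : ℝ} (hirr : Irrational x) (hx : x ∈ Ioc 0 1) {n : ℕ}
    (hn : 1 ≤ n) : x - lurothConv x n < (lurothQ x n : ℝ)⁻¹ := by
  obtain ⟨hirr_n, hn'⟩ := lurothT_mapsTo_irrational.iterate n ⟨hirr, hx⟩
  exact _root_.sub_lurothConv_lt hx hn (hn'.2.lt_of_ne hirr_n.ne_one)

lemma setOf_irrational_inter_Ioc_subset_Ltau_zero :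
    {x ∈ Ioc (0 : ℝ) 1 | Irrational x} ⊆ Ltau 0 := by
  rintro x ⟨hx, hirr⟩
  refine ⟨hx, fun N ↦ ⟨N + 1, by omega, by omega, ?_⟩⟩
  rw [abs_of_pos (sub_lurothConv_pos hx _), add_zero, Real.rpow_neg_one]
  exact hirr.sub_lurothConv_lt hx (by omega)

lemma dimH_setOf_irrational_inter_Ioc : dimH {x ∈ Ioc (0 : ℝ) 1 | Irrational x} = 1 := by
  have hsplit : Ioc (0 : ℝ) 1 ⊆ {x ∈ Ioc 0 1 | Irrational x} ∪ range ((↑) : ℚ → ℝ) :=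
    fun x hx ↦ (em (Irrational x)).imp (fun h ↦ ⟨hx, h⟩) not_not.mp
  have hIoc : dimH (Ioc (0 : ℝ) 1) = 1 := by
    rw [Real.dimH_of_nonempty_interior (by simp), Module.finrank_self, Nat.cast_one]
  refine le_antisymm (Real.dimH_univ ▸ dimH_mono (subset_univ _)) ?_
  simpa [hIoc, dimH_union, dimH_countable (countable_range _)] using dimH_mono hsplit

theorem stmt9 :
    (∀ x ∈ Set.Ioc (0:ℝ) 1, Irrational x →
      {n : ℕ | 1 ≤ n ∧ 3 ≤ lurothD x n}.Infinite ∧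
      {n : ℕ | 1 ≤ n ∧ 0 < x - lurothConv x n ∧
        x - lurothConv x n < 1 / (lurothQ x n : ℝ)}.Infinite) ∧
    {x ∈ Set.Ioc (0:ℝ) 1 | Irrational x} ⊆ Ltau 0 ∧
    dimH (Ltau 0) = 1 := by
  refine ⟨fun x hx hirr ↦ ⟨?_, ?_⟩, setOf_irrational_inter_Ioc_subset_Ltau_zero, ?_⟩
  · refine infinite_of_forall_exists_gt fun m ↦ ?_
    obtain ⟨n, hmn, hn⟩ := exists_gt_three_le_lurothD hx hirr m
    exact ⟨n, ⟨by omega, hn⟩, hmn⟩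
  · refine (Ici_infinite 1).mono fun n hn ↦ ⟨hn, sub_lurothConv_pos hx n, ?_⟩
    rw [one_div]
    exact hirr.sub_lurothConv_lt hx hn
  · refine le_antisymm (Real.dimH_univ ▸ dimH_mono (subset_univ _)) ?_
    exact dimH_setOf_irrational_inter_Ioc ▸ dimH_mono setOf_irrational_inter_Ioc_subset_Ltau_zero
end

section
/- Fix τ ≥ 0 and define ψ(q) = q^{−(τ + ν₂(q))} where ν₂ is the 2-adic valuation. Then dim_H L(ψ) = 0, even though the lower order τ̲_ψ equals τ (so 1/(1+τ̲_ψ) > 0). Hence the conjecture dim_H L(ψ) = 1/(1+τ̲_ψ) fails without monotonicity of ψ. -/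
open MeasureTheory Filter Set
open scoped ENNReal NNReal Topology

open scoped ENNReal Topology

/-!
Every Lüroth denominator `Q_n(x)` is divisible by `2^(n-1)`, since each factor `d(d-1)` is even.
Hence `ψ(Q_n) ≤ Q_n^(-j)` once `n > j`, and every point of `L(ψ)` is approximated to order `1 + j`
by infinitely many fractions `m/q ∈ [0, 2]` (the convergents, whose numerators are integers).
Covering those points by the `2q + 1` balls of radius `q^(-1-j)` around the `m/q`, `q ≥ N`, shows
that the `d`-dimensional Hausdorff measure vanishes as soon as `(1 + j) d > 2`. As `j` is
arbitrary, `dim_H L(ψ) = 0`. On the other hand `-log ψ(q) / log q = τ + ν₂(q)`, whose lower limit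
is `τ`, attained along the odd numbers.
-/

section Luroth

variable (x : ℝ)

lemma lurothQ_dvd_lurothQ {k n : ℕ} (hk : 1 ≤ k) (hkn : k ≤ n) :
    lurothQ x k ∣ lurothQ x n := by
  rcases hkn.eq_or_lt with rfl | hkn
  · rfl
  calc lurothQ x k
      ∣ (∏ j ∈ Finset.Ico 1 k, lurothD x j * (lurothD x j - 1)) *
          (lurothD x k * (lurothD x k - 1)) :=
        ⟨lurothD x k - 1, by rw [lurothQ]; ring⟩
    _ = ∏ j ∈ Finset.Ico 1 (k + 1), lurothD x j * (lurothD x j - 1) :=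
        (Finset.prod_Ico_succ_top hk _).symm
    _ ∣ ∏ j ∈ Finset.Ico 1 n, lurothD x j * (lurothD x j - 1) :=
        Finset.prod_dvd_prod_of_subset _ _ _ (Finset.Ico_subset_Ico_right hkn)
    _ ∣ lurothQ x n := dvd_mul_left _ _

lemma two_pow_dvd_lurothQ (n : ℕ) : 2 ^ (n - 1) ∣ lurothQ x n := by
  have h := Finset.prod_dvd_prod_of_dvd (fun _ ↦ 2) (fun j ↦ lurothD x j * (lurothD x j - 1))
    (s := Finset.Ico 1 n) fun j _ ↦ (Nat.even_mul_pred_self _).two_dvd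
  rw [Finset.prod_const, Nat.card_Ico] at h
  exact h.mul_left _

lemma exists_natCast_eq_lurothP (n : ℕ) : ∃ m : ℕ, (m : ℝ) = lurothP x n := by
  refine ⟨∑ k ∈ Finset.Icc 1 n, lurothQ x n / lurothQ x k, ?_⟩
  rw [lurothP, lurothConv, Finset.sum_mul, Nat.cast_sum]
  refine Finset.sum_congr rfl fun k hk ↦ ?_
  obtain ⟨hk1, hkn⟩ := Finset.mem_Icc.1 hk
  rw [Nat.cast_div_charZero (lurothQ_dvd_lurothQ x hk1 hkn), div_eq_inv_mul]

end Luroth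

def ratApproxSet (s : ℝ) : Set ℝ :=
  {x | ∀ N : ℕ, ∃ q m : ℕ, N ≤ q ∧ m ≤ 2 * q ∧ |x - m / q| < (q : ℝ) ^ (-s)}

theorem Lpsi_subset_ratApproxSet {τ : ℝ} (hτ : 0 ≤ τ) {ψ : ℕ → ℝ}
    (hψ : ∀ q, ψ q = (q : ℝ) ^ (-(τ + (padicValNat 2 q : ℝ)))) (j : ℕ) :
    Lpsi ψ ⊆ ratApproxSet (1 + j) := by
  rintro x ⟨hx, hxψ⟩ N
  obtain ⟨n, hNn, -, happrox⟩ := hxψ (max N (j + 1))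
  set Q := lurothQ x n
  have hQ : Q ≠ 0 := by
    rintro hQ
    rw [hQ, Nat.cast_zero, div_zero] at happrox
    exact (abs_nonneg _).not_gt happrox
  have hQ1 : (1 : ℝ) ≤ Q := by exact_mod_cast Nat.one_le_iff_ne_zero.2 hQ
  have hval : j ≤ padicValNat 2 Q :=
    ((padicValNat_dvd_iff_le hQ).1 (two_pow_dvd_lurothQ x n)).trans' (by omega)
  have hNQ : N ≤ Q := calc
    N ≤ 2 ^ (n - 1) := by have := Nat.lt_two_pow_self (n := n - 1); omega
    _ ≤ Q := Nat.le_of_dvd (Nat.pos_of_ne_zero hQ) (two_pow_dvd_lurothQ x n)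
  have hψQ : ψ Q / Q ≤ (Q : ℝ) ^ (-(1 + j : ℝ)) := by
    rw [hψ, ← Real.rpow_sub_one (by positivity)]
    have : (j : ℝ) ≤ padicValNat 2 Q := by exact_mod_cast hval
    exact Real.rpow_le_rpow_of_exponent_le hQ1 (by linarith)
  obtain ⟨m, hm⟩ := exists_natCast_eq_lurothP x n
  have hconv : (m : ℝ) / Q = lurothConv x n := by
    rw [hm, lurothP, mul_div_cancel_right₀ _ (by positivity)]
  have hclose : |x - m / Q| < (Q : ℝ) ^ (-(1 + j : ℝ)) := hconv ▸ happrox.trans_le hψQ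
  refine ⟨Q, m, hNQ, ?_, hclose⟩
  have hsmall : (Q : ℝ) ^ (-(1 + j : ℝ)) ≤ 1 :=
    Real.rpow_le_one_of_one_le_of_nonpos hQ1 (by linarith [(j.cast_nonneg : (0 : ℝ) ≤ j)])
  have hmQ : (m : ℝ) / Q ≤ 2 := by linarith [(abs_lt.1 hclose).1, hx.2]
  exact_mod_cast (div_le_iff₀ (by positivity)).1 hmQ

section RatApprox

variable {s d : ℝ}

lemma ediam_ball_le {X : Type*} [PseudoMetricSpace X] (x : X) (r : ℝ) :
    Metric.ediam (Metric.ball x r) ≤ ENNReal.ofReal (2 * r) := by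
  rw [← Metric.eball_ofReal, ENNReal.ofReal_mul zero_le_two, ENNReal.ofReal_ofNat]
  exact Metric.ediam_eball_le

/-- The ball around `m / q` is indexed by `⟨q - N, m⟩`, so that the total mass of the cover is a
tail of a fixed series. -/
def ratApproxCover (s : ℝ) (N : ℕ) (i : Σ k : ℕ, Fin (2 * (k + N) + 1)) : Set ℝ :=
  Metric.ball ((i.2 : ℝ) / (i.1 + N : ℕ)) (((i.1 + N : ℕ) : ℝ) ^ (-s))

lemma ratApproxSet_subset_iUnion_ratApproxCover (s : ℝ) (N : ℕ) :
    ratApproxSet s ⊆ ⋃ i, ratApproxCover s N i := by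
  intro x hx
  obtain ⟨q, m, hNq, hmq, hxq⟩ := hx N
  obtain ⟨k, rfl⟩ := Nat.exists_eq_add_of_le' hNq
  exact mem_iUnion.2 ⟨⟨k, m, by omega⟩, by simpa [ratApproxCover, Real.dist_eq] using hxq⟩

lemma ediam_ratApproxCover_le (hs : 0 < s) {N : ℕ} (hN : 1 ≤ N)
    (i : Σ k : ℕ, Fin (2 * (k + N) + 1)) :
    Metric.ediam (ratApproxCover s N i) ≤ ENNReal.ofReal (2 * (N : ℝ) ^ (-s)) := by
  refine (ediam_ball_le _ _).trans (ENNReal.ofReal_le_ofReal ?_)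
  gcongr 2 * ?_
  exact Real.rpow_le_rpow_of_nonpos (by positivity) (by simp) (by linarith)

/-- The `d`-mass of the `2q + 1` balls of `ratApproxCover` with denominator `q`. -/
noncomputable def ratApproxMass (s d : ℝ) (q : ℕ) : ℝ := (2 * q + 1) * (2 * (q : ℝ) ^ (-s)) ^ d

lemma tsum_ediam_rpow_ratApproxCover_le (hd : 0 ≤ d) (N : ℕ) :
    ∑' i, Metric.ediam (ratApproxCover s N i) ^ d ≤
      ∑' k, ENNReal.ofReal (ratApproxMass s d (k + N)) := by
  rw [ENNReal.tsum_sigma']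
  refine ENNReal.tsum_le_tsum fun k ↦ ?_
  calc ∑' m, Metric.ediam (ratApproxCover s N ⟨k, m⟩) ^ d
      ≤ ∑' _ : Fin (2 * (k + N) + 1), ENNReal.ofReal ((2 * ((k + N : ℕ) : ℝ) ^ (-s)) ^ d) := by
        refine ENNReal.tsum_le_tsum fun m ↦ ?_
        rw [← ENNReal.ofReal_rpow_of_nonneg (by positivity) hd]
        exact ENNReal.rpow_le_rpow (ediam_ball_le _ _) hd
    _ = ENNReal.ofReal (ratApproxMass s d (k + N)) := by
        rw [tsum_fintype, Finset.sum_const, Finset.card_univ, Fintype.card_fin, nsmul_eq_mul,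
          ratApproxMass, ENNReal.ofReal_mul (by positivity)]
        norm_cast

lemma summable_ratApproxMass (hd : 0 < d) (hsd : 2 < s * d) :
    Summable (ratApproxMass s d) := by
  have hs : 0 < s := pos_of_mul_pos_left (by linarith) hd.le
  refine Summable.of_nonneg_of_le (fun q ↦ by unfold ratApproxMass; positivity) (fun q ↦ ?_)
    ((Real.summable_nat_rpow.2 (by linarith : 1 - s * d < -1)).mul_left (3 * 2 ^ d))
  rcases Nat.eq_zero_or_pos q with rfl | hq
  · rw [ratApproxMass, Nat.cast_zero, Real.zero_rpow (neg_ne_zero.2 hs.ne'), mul_zero,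
      Real.zero_rpow hd.ne', mul_zero]
    positivity
  have hq' : (0 : ℝ) < q := by exact_mod_cast hq
  calc ratApproxMass s d q = (2 * q + 1) * (2 ^ d * (q : ℝ) ^ (-(s * d))) := by
        rw [ratApproxMass, Real.mul_rpow zero_le_two (by positivity), ← Real.rpow_mul hq'.le,
          neg_mul]
    _ ≤ 3 * q * (2 ^ d * (q : ℝ) ^ (-(s * d))) := by
        gcongr
        linarith [(by exact_mod_cast hq : (1 : ℝ) ≤ q)]
    _ = 3 * 2 ^ d * (q : ℝ) ^ (1 - s * d) := by
        rw [sub_eq_add_neg, Real.rpow_add hq', Real.rpow_one]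
        ring

theorem hausdorffMeasure_ratApproxSet_eq_zero (hd : 0 < d) (hsd : 2 < s * d) :
    μH[d] (ratApproxSet s) = 0 := by
  have hs : 0 < s := pos_of_mul_pos_left (by linarith) hd.le
  have hmass : ∑' q, ENNReal.ofReal (ratApproxMass s d q) ≠ ∞ := by
    rw [← ENNReal.ofReal_tsum_of_nonneg (fun q ↦ by unfold ratApproxMass; positivity)
      (summable_ratApproxMass hd hsd)]
    exact ENNReal.ofReal_ne_top
  have hr : Tendsto (fun N : ℕ ↦ ENNReal.ofReal (2 * (N : ℝ) ^ (-s))) atTop (𝓝 0) := by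
    simpa using ENNReal.tendsto_ofReal
      (((tendsto_rpow_neg_atTop hs).comp tendsto_natCast_atTop_atTop).const_mul 2)
  have hcover := Measure.hausdorffMeasure_le_liminf_tsum d (ratApproxSet s) _ hr (ratApproxCover s)
    ((eventually_ge_atTop 1).mono fun N hN ↦ ediam_ratApproxCover_le hs hN)
    (Eventually.of_forall (ratApproxSet_subset_iUnion_ratApproxCover s))
  refine nonpos_iff_eq_zero.1 (hcover.trans ?_)
  calc liminf (fun N ↦ ∑' i, Metric.ediam (ratApproxCover s N i) ^ d) atTop
      ≤ liminf (fun N ↦ ∑' k, ENNReal.ofReal (ratApproxMass s d (k + N))) atTop :=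
        liminf_le_liminf (Eventually.of_forall (tsum_ediam_rpow_ratApproxCover_le hd.le))
    _ = 0 := (ENNReal.tendsto_sum_nat_add _ hmass).liminf_eq

end RatApprox

lemma dimH_eq_zero_of_forall_hausdorffMeasure_eq_zero {X : Type*} [EMetricSpace X]
    [MeasurableSpace X] [BorelSpace X] {A : Set X} (h : ∀ d : ℝ, 0 < d → μH[d] A = 0) :
    dimH A = 0 := by
  refine nonpos_iff_eq_zero.1 (dimH_le fun d hd ↦ ?_)
  by_contra hpos
  have hd0 : (0 : ℝ) < d := NNReal.coe_pos.2 (pos_iff_ne_zero.2 (by simpa using hpos))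
  exact ENNReal.zero_ne_top (h d hd0 ▸ hd)

theorem hausdorffMeasure_Lpsi_eq_zero {τ : ℝ} (hτ : 0 ≤ τ) {ψ : ℕ → ℝ}
    (hψ : ∀ q, ψ q = (q : ℝ) ^ (-(τ + (padicValNat 2 q : ℝ)))) {d : ℝ} (hd : 0 < d) :
    μH[d] (Lpsi ψ) = 0 := by
  obtain ⟨j, hj⟩ := exists_nat_gt (2 / d)
  refine measure_mono_null (Lpsi_subset_ratApproxSet hτ hψ j)
    (hausdorffMeasure_ratApproxSet_eq_zero hd ?_)
  rw [div_lt_iff₀ hd] at hj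
  linarith

lemma neg_log_rpow_neg_div_log {q : ℝ} (hq : 1 < q) (a : ℝ) :
    -Real.log (q ^ (-a)) / Real.log q = a := by
  rw [Real.log_rpow (by linarith), neg_mul, neg_neg, mul_div_cancel_right₀ _ (Real.log_pos hq).ne']

lemma liminf_const_add_padicValNat (τ : ℝ) (p : ℕ) [hp : Fact p.Prime] :
    liminf (fun q : ℕ ↦ τ + padicValNat p q) atTop = τ := by
  have hge : ∀ q : ℕ, τ ≤ τ + padicValNat p q := fun q ↦ le_add_of_nonneg_right (Nat.cast_nonneg _)
  have hfreq : ∃ᶠ q : ℕ in atTop, τ + padicValNat p q ≤ τ := by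
    refine frequently_atTop.2 fun a ↦ ⟨p * a + 1, ?_, ?_⟩
    · nlinarith [hp.out.two_le]
    · rw [padicValNat.eq_zero_of_not_dvd, Nat.cast_zero, add_zero]
      rw [Nat.dvd_add_right (dvd_mul_right p a), Nat.dvd_one]
      exact hp.out.ne_one
  exact le_antisymm (liminf_le_of_frequently_le hfreq ⟨τ, eventually_map.2 (.of_forall hge)⟩)
    (le_liminf_of_le (IsCoboundedUnder.of_frequently_le hfreq) (.of_forall hge))

theorem stmt15 (τ : ℝ) (hτ : 0 ≤ τ) (ψ : ℕ → ℝ)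
    (hψ : ∀ q, ψ q = (q : ℝ) ^ (-(τ + (padicValNat 2 q : ℝ)))) :
    dimH (Lpsi ψ) = 0 ∧
    liminf (fun q : ℕ => -Real.log (ψ q) / Real.log q) atTop = τ ∧
    dimH (Lpsi ψ) ≠ ENNReal.ofReal (1 / (1 + τ)) := by
  have hdim : dimH (Lpsi ψ) = 0 :=
    dimH_eq_zero_of_forall_hausdorffMeasure_eq_zero fun _ ↦ hausdorffMeasure_Lpsi_eq_zero hτ hψ
  refine ⟨hdim, ?_, ?_⟩
  · rw [← liminf_const_add_padicValNat τ 2]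
    refine liminf_congr ((eventually_gt_atTop 1).mono fun q hq ↦ ?_)
    rw [hψ, neg_log_rpow_neg_div_log (by exact_mod_cast hq)]
  · rw [hdim]
    exact (ENNReal.ofReal_pos.2 (one_div_pos.2 (by linarith : (0 : ℝ) < 1 + τ))).ne
end

section
/- Let ψ: ℕ → (0,1/2] be non-increasing. If the series Σ_{q=1}^∞ (−ψ(q) log ψ(q))/q diverges, then the series Σ_{q=1}^∞ ψ(q) diverges. -/
open MeasureTheory Filter Set

/-!
For `0 ≤ t` one has `-t log t ≤ 2 √t` (from `|s log s| < 1` on `(0, 1]` at `s = √t`), and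
`2 √t / q ≤ t + 1 / q²` by AM–GM; hence `∑ -ψ(q) log ψ(q) / q` is dominated by
`2 ∑ ψ(q) + 2 ∑ 1 / q²`, which converges when `∑ ψ(q)` does.
-/

open Real

theorem Real.negMulLog_le_two_mul_sqrt {t : ℝ} (ht : 0 ≤ t) : negMulLog t ≤ 2 * √t := by
  rcases ht.eq_or_lt with rfl | ht
  · simp
  rcases le_or_gt t 1 with ht1 | ht1
  · set s := √t
    have hs : 0 < s := sqrt_pos.2 ht
    have hst : s * s = t := mul_self_sqrt ht.le
    have hlog : log t = 2 * log s := by rw [← hst, log_mul hs.ne' hs.ne']; ring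
    have hbound := abs_log_mul_self_lt s hs (sqrt_le_one.2 ht1)
    calc negMulLog t = 2 * s * -(log s * s) := by rw [negMulLog, hlog, ← hst]; ring
      _ ≤ 2 * s * 1 := by gcongr; exact (neg_le_abs _).trans hbound.le
      _ = 2 * s := mul_one _
  · have : negMulLog t ≤ 0 := by
      rw [negMulLog, neg_mul, neg_nonpos]
      exact mul_nonneg ht.le (log_nonneg ht1.le)
    linarith [sqrt_nonneg t]

theorem summable_sqrt_div_natCast {f : ℕ → ℝ} (hf0 : ∀ n, 0 ≤ f n) (hf : Summable f) :
    Summable fun n : ℕ => √(f n) / n := by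
  refine .of_nonneg_of_le (fun n => by positivity) (fun n => ?_)
    (hf.add (summable_nat_pow_inv.2 one_lt_two))
  have hamgm := two_mul_le_add_sq (√(f n)) (n : ℝ)⁻¹
  rw [sq_sqrt (hf0 n), inv_pow] at hamgm
  have : 0 ≤ √(f n) * (n : ℝ)⁻¹ := by positivity
  rw [div_eq_mul_inv]
  linarith

theorem summable_negMulLog_div_natCast {f : ℕ → ℝ} (hf0 : ∀ n, 0 ≤ f n) (hf1 : ∀ n, f n ≤ 1)
    (hf : Summable f) : Summable fun n : ℕ => negMulLog (f n) / n := by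
  refine .of_nonneg_of_le (fun n => div_nonneg (negMulLog_nonneg (hf0 n) (hf1 n)) n.cast_nonneg)
    (fun n => ?_) ((summable_sqrt_div_natCast hf0 hf).mul_left 2)
  rw [← mul_div_assoc]
  gcongr
  exact negMulLog_le_two_mul_sqrt (hf0 n)

theorem stmt19_general (ψ : ℕ → ℝ) (hψ : ∀ q, ψ q ∈ Set.Ioc (0:ℝ) (1/2))
    (hdiv : ¬ Summable (fun q : ℕ => -ψ q * Real.log (ψ q) / (q : ℝ))) :
    ¬ Summable ψ := fun hsum =>
  hdiv <| summable_negMulLog_div_natCast (fun q => (hψ q).1.le)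
    (fun q => (hψ q).2.trans (by norm_num)) hsum

theorem stmt19 (ψ : ℕ → ℝ) (hψ : ∀ q, ψ q ∈ Set.Ioc (0:ℝ) (1/2)) (hmono : Antitone ψ)
    (hdiv : ¬ Summable (fun q : ℕ => -ψ q * Real.log (ψ q) / (q : ℝ))) :
    ¬ Summable ψ :=
  stmt19_general ψ hψ hdiv
end
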